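/- arXiv:1511.05882 — 2 statements merged into one kernel-verified Lean document; each statement's English description precedes it below -/
import Mathlib

section
/- For any scattered space (X, τ) and any ordinals λ and μ, the topologies satisfy (τ_λ)_μ = τ_{λ+μ}: the μ-th Icard topology based on (X, τ_λ) equals the (λ+μ)-th Icard topology based on (X, τ). -/
open Ordinal Set

noncomputable section

universe u

/-! ## Basic topological notions (explicit topologies) -/

/-- The derived set (set of limit points) of `A` w.r.t. the topology `t`. -/
def dSet {X : Type u} (t : TopologicalSpace X) (A : Set X) : Set X :=
  {x | ∀ U : Set X, t.IsOpen U → x ∈ U → ∃ y, y ∈ U ∩ A ∧ y ≠ x}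

/-- Transfinite iterates of the derived-set operator, starting from the whole space. -/
def dIter {X : Type u} (t : TopologicalSpace X) (o : Ordinal.{u}) : Set X :=
  Ordinal.limitRecOn o Set.univ (fun _ ih => dSet t ih)
    (fun o _ ih => ⋂ (o' : Ordinal.{u}) (h : o' < o), ih o' h)

/-- The Cantor–Bendixson rank of a point: the least `ξ` with `x ∉ d^{ξ+1} X`. -/
def ptRank {X : Type u} (t : TopologicalSpace X) (x : X) : Ordinal.{u} :=
  sInf {ξ : Ordinal.{u} | x ∉ dIter t (ξ + 1)}

/-- The rank of a space: `sup_{x ∈ X} (ρ(x) + 1)`. -/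
def spRank (X : Type u) (t : TopologicalSpace X) : Ordinal.{u} :=
  ⨆ x : X, ptRank t x + 1

/-- A space is scattered if every nonempty subset has an isolated point. -/
def IsScattered {X : Type u} (t : TopologicalSpace X) : Prop :=
  ∀ A : Set X, A.Nonempty → ∃ x ∈ A, ∃ U : Set X, t.IsOpen U ∧ U ∩ A = {x}

/-- A `d`-map: continuous, open and pointwise discrete. -/
def IsDMap {X : Type u} {Y : Type*} (t : TopologicalSpace X) (s : TopologicalSpace Y)
    (f : X → Y) : Prop :=
  @Continuous _ _ t s f ∧ @IsOpenMap _ _ t s f ∧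
    ∀ y : Y, ∀ x : X, f x = y →
      ∃ U : Set X, t.IsOpen U ∧ x ∈ U ∧ ∀ z ∈ U, f z = y → z = x

/-! ## Hyperexponentials and hyperlogarithms -/

/-- The exponential `e ξ = -1 + ω^ξ`. -/
def eFun (x : Ordinal.{u}) : Ordinal.{u} := ω ^ x - 1

/-- `E` is the family of hyperexponentials: a family of normal functions with `E 1 = e`,
`E (α+β) = E α ∘ E β`, pointwise minimal among all such families. -/
def IsHyperexpFamily (E : Ordinal.{u} → Ordinal.{u} → Ordinal.{u}) : Prop :=
  (∀ a, Order.IsNormal (E a)) ∧ E 1 = eFun ∧ (∀ a b, E (a + b) = E a ∘ E b) ∧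
    ∀ F : Ordinal.{u} → Ordinal.{u} → Ordinal.{u},
      (∀ a, Order.IsNormal (F a)) → F 1 = eFun → (∀ a b, F (a + b) = F a ∘ F b) →
        ∀ a b, E a b ≤ F a b

/-- The end logarithm: `ℓ 0 = 0` and `ℓ ξ` is the unique `β` with `ξ = α + ω^β`. -/
def ellFun (x : Ordinal.{u}) : Ordinal.{u} :=
  if x = 0 then 0 else sInf {b : Ordinal.{u} | ∃ a, x = a + ω ^ b}

/-- An initial function maps initial segments onto initial segments. -/
def IsInitialFun (f : Ordinal.{u} → Ordinal.{u}) : Prop :=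
  ∀ o : Ordinal.{u}, ∃ o' : Ordinal.{u}, f '' Set.Iio o = Set.Iio o'

/-- `L` is the family of hyperlogarithms: a family of initial functions with `L 1 = ℓ`,
`L (α+β) = L β ∘ L α`, pointwise maximal among all such families. -/
def IsHyperlogFamily (L : Ordinal.{u} → Ordinal.{u} → Ordinal.{u}) : Prop :=
  (∀ a, IsInitialFun (L a)) ∧ L 1 = ellFun ∧ (∀ a b, L (a + b) = L b ∘ L a) ∧
    ∀ M : Ordinal.{u} → Ordinal.{u} → Ordinal.{u},
      (∀ a, IsInitialFun (M a)) → M 1 = ellFun → (∀ a b, M (a + b) = M b ∘ M a) →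
        ∀ a b, M a b ≤ L a b

/-! ## Icard topologies -/

/-- The generalized Icard topology `τ_λ` based on a space `(X, t)`, relative to a family `L`
of hyperlogarithms: the least topology containing `t` and all sets
`(α, β]_ξ = {x | α < ℓ^ξ ρ_t(x) ≤ β}` (including `α = -1`, i.e. `[0, β]_ξ`), for `ξ < λ`. -/
def IcardTop {X : Type u} (L : Ordinal.{u} → Ordinal.{u} → Ordinal.{u})
    (t : TopologicalSpace X) (lam : Ordinal.{u}) : TopologicalSpace X :=
  t ⊓ TopologicalSpace.generateFrom
    {S : Set X | ∃ ξ < lam,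
      (∃ b : Ordinal.{u}, S = {x | L ξ (ptRank t x) ≤ b}) ∨
      (∃ a b : Ordinal.{u}, a < b ∧ S = {x | a < L ξ (ptRank t x) ∧ L ξ (ptRank t x) ≤ b})}

/-! ## Ordinal spaces -/

/-- The ordinal corresponding to a point of `Θ.ToType`. -/
def ordVal {Θ : Ordinal.{u}} (x : Θ.ToType) : Ordinal.{u} :=
  @Ordinal.typein Θ.ToType (· < ·) isWellOrder_lt x

/-- The left topology `I₀` on (the canonical type of order type) `Θ`, generated by the
intervals `[0, β]`. -/
def leftTop (Θ : Ordinal.{u}) : TopologicalSpace Θ.ToType :=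
  TopologicalSpace.generateFrom {S : Set Θ.ToType | ∃ b : Θ.ToType, S = Set.Iic b}

/-- The interval topology `I₁` on `Θ`, generated by the sets `[0, β]` and `(α, β]`. -/
def intervalTop (Θ : Ordinal.{u}) : TopologicalSpace Θ.ToType :=
  TopologicalSpace.generateFrom
    {S : Set Θ.ToType | (∃ b, S = Set.Iic b) ∨ ∃ a b : Θ.ToType, S = Set.Ioc a b}

/-- The Icard topology `I_λ = (I₀)_λ` on the ordinal `Θ`: the least topology containing the
left topology and all sets `{x < Θ | α < ℓ^ξ x ≤ β}` for `ξ < λ`. -/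
def ordIcard (L : Ordinal.{u} → Ordinal.{u} → Ordinal.{u}) (Θ lam : Ordinal.{u}) :
    TopologicalSpace Θ.ToType :=
  leftTop Θ ⊓ TopologicalSpace.generateFrom
    {S : Set Θ.ToType | ∃ ξ < lam,
      (∃ b : Ordinal.{u}, S = {x | L ξ (ordVal x) ≤ b}) ∨
      (∃ a b : Ordinal.{u}, a < b ∧ S = {x | a < L ξ (ordVal x) ∧ L ξ (ordVal x) ≤ b})}

/-! ## Modal logic: GL and topological (d-)semantics -/

/-- Formulas of the basic modal language. -/
inductive Fml : Type
  | bot : Fml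
  | var : ℕ → Fml
  | imp : Fml → Fml → Fml
  | box : Fml → Fml

namespace Fml

/-- Negation. -/
def neg (p : Fml) : Fml := p.imp .bot

/-- Diamond. -/
def dia (p : Fml) : Fml := (p.neg.box).neg

end Fml

/-- The valuation determined by an assignment `V` of sets to propositional variables, in the
`d`-semantics: `⟦◇φ⟧ = d⟦φ⟧`, i.e. `⟦◻φ⟧` is the complement of the derived set of the
complement of `⟦φ⟧`. -/
def fval {X : Type u} (t : TopologicalSpace X) (V : ℕ → Set X) : Fml → Set X
  | .bot => ∅
  | .var n => V n
  | .imp p q => (fval t V p)ᶜ ∪ fval t V q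
  | .box p => (dSet t (fval t V p)ᶜ)ᶜ

/-- Classical tautologies (boxed formulas and variables treated as atoms). -/
def Tautology (φ : Fml) : Prop :=
  ∀ v : Fml → Bool, v .bot = false → (∀ p q : Fml, v (p.imp q) = (!(v p) || v q)) →
    v φ = true

/-- Provability in the Gödel–Löb provability logic `GL`. -/
inductive GLProv : Fml → Prop
  | taut {φ : Fml} : Tautology φ → GLProv φ
  | axK (p q : Fml) : GLProv (((p.imp q).box).imp ((p.box).imp q.box))
  | axLob (p : Fml) : GLProv ((((p.box).imp p).box).imp p.box)
  | mp {p q : Fml} : GLProv (p.imp q) → GLProv p → GLProv q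
  | nec {p : Fml} : GLProv p → GLProv p.box

/-- A set of formulas is GL-consistent if no finite conjunction of its members provably
implies `⊥`. -/
def GLConsistent (Γ : Set Fml) : Prop :=
  ¬ ∃ l : List Fml, (∀ φ ∈ l, φ ∈ Γ) ∧ GLProv (l.foldr .imp .bot)

/-- `Γ` is satisfied in the space `(X, t)`. -/
def SatisfiedIn {X : Type u} (t : TopologicalSpace X) (Γ : Set Fml) : Prop :=
  ∃ (V : ℕ → Set X) (x : X), ∀ φ ∈ Γ, x ∈ fval t V φ

/-- `GL` is strongly complete with respect to `(X, t)`. -/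
def StronglyCompleteFor {X : Type u} (t : TopologicalSpace X) : Prop :=
  ∀ Γ : Set Fml, GLConsistent Γ → SatisfiedIn t Γ

/-- Validity of a formula in a space under the `d`-semantics. -/
def ValidIn {X : Type u} (t : TopologicalSpace X) (φ : Fml) : Prop :=
  ∀ V : ℕ → Set X, fval t V φ = Set.univ

/-! ## Trees and ω-bouquets -/

/-- The upset topology of a relation: opens are the `R`-upward closed sets. -/
def upTop {T : Type u} (R : T → T → Prop) : TopologicalSpace T where
  IsOpen U := ∀ x ∈ U, ∀ y, R x y → y ∈ U
  isOpen_univ := fun x _ y _ => trivial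
  isOpen_inter := fun s t hs ht x hx y hR => ⟨hs x hx.1 y hR, ht x hx.2 y hR⟩
  isOpen_sUnion := fun S hS x hx y hR => by
    obtain ⟨s, hsS, hxs⟩ := hx
    exact ⟨s, hsS, hS s hsS x hxs y hR⟩

/-- A countable, converse well-founded tree. -/
structure IsOmegaTree {T : Type u} (R : T → T → Prop) : Prop where
  countable : Countable T
  trans : ∀ a b c, R a b → R b c → R a c
  irrefl : ∀ a, ¬ R a a
  predWellOrdered : ∀ t : T, IsWellOrder {s : T // R s t} (fun a b => R a.1 b.1)
  root : ∃! r : T, ∀ s : T, ¬ R s r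
  converseWellFounded : WellFounded (fun a b : T => R b a)

/-- The daughters (immediate successors) of a node. -/
def daughters {T : Type u} (R : T → T → Prop) (w : T) : Set T :=
  {v | R w v ∧ ¬ ∃ u, R w u ∧ R u v}

/-- The bouquet topology `σ_R`: the least topology extending the upset topology such that
whenever `w` has limit rank, `(v_i)` enumerates the daughters of `w` without repetition and
`n < ω`, the set `{w} ∪ ⋃_{i > n} ({v_i} ∪ R(v_i))` is open. -/
def sigmaTop {T : Type u} (R : T → T → Prop) : TopologicalSpace T :=
  upTop R ⊓ TopologicalSpace.generateFrom
    {S : Set T | ∃ w : T, Order.IsSuccLimit (ptRank (upTop R) w) ∧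
      ∃ v : ℕ → T, Function.Injective v ∧ Set.range v = daughters R w ∧
        ∃ n : ℕ, S = {w} ∪ ⋃ (i : ℕ) (_ : n < i), ({v i} ∪ {u | R (v i) u})}

/-! ## The club topology (via its neighborhood characterization) -/

/-- `C` is a club in (i.e. a closed unbounded subset of) the point `x`. -/
def IsClubIn {Θ : Ordinal.{u}} (C : Set Θ.ToType) (x : Θ.ToType) : Prop :=
  (∀ y ∈ C, y < x) ∧ (∀ z, z < x → ∃ y ∈ C, z < y) ∧
    ∀ z, z < x → (∃ w, w < z) → (∀ w, w < z → ∃ y ∈ C, w < y ∧ y < z) → z ∈ C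

/-- `t` is the club topology on `Θ`: a set `U` is a neighborhood of a point `x ∈ U` iff
`U` contains a club in `x` or `cf(x) < ℵ₁`. -/
def IsClubTop (Θ : Ordinal.{u}) (t : TopologicalSpace Θ.ToType) : Prop :=
  ∀ (U : Set Θ.ToType) (x : Θ.ToType), x ∈ U →
    (U ∈ @nhds _ t x ↔
      (Ordinal.cof (ordVal x) < Cardinal.aleph 1 ∨ ∃ C ⊆ U, IsClubIn C x))

/-!
Everything rests on the rank formula `ρ_{τ_λ} = ℓ^λ ∘ ρ_τ`. Since the sets `[0, β]` and `(α, β]`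
generate the order topology of the ordinals, `τ_λ` is `τ` joined with the topologies induced by
the maps `ℓ^ξ ∘ ρ_τ`, `ξ < λ`. Given the rank formula at `λ`, the level-`ξ` maps of `τ_λ` are
`ℓ^ξ ∘ ℓ^λ ∘ ρ_τ = ℓ^{λ+ξ} ∘ ρ_τ`, and `(τ_λ)_μ = τ_{λ+μ}` follows.

The rank formula is proved by induction on `λ`. If `λ = λ₁ + λ₂` with `λ₁, λ₂ < λ`, then
`τ_λ = (τ_{λ₁})_{λ₂}` by the argument above, and the formula composes. For `λ = 1` it is the
behaviour of the end logarithm on the intervals `(α, α + ω^β]`. For an additively principal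
`λ > 1` we have `ℓ^λ ∘ ℓ^ξ = ℓ^λ` for `ξ < λ`, and every `τ_λ`-neighbourhood contains a
`τ_ξ`-neighbourhood for some `ξ < λ`. What remains is that `ℓ^λ w < ℓ^λ B` whenever `w < B`
and `B` is fixed by all `ℓ^ξ`, `ξ < λ`: otherwise `ℓ^λ` could be raised at `B`, and the
resulting family would contradict the maximality of the hyperlogarithms.
-/

open Topology

theorem exists_eq_add_omega0_opow {β : Ordinal.{u}} (hβ : β ≠ 0) :
    ∃ a b : Ordinal.{u}, β = a + ω ^ b := by
  obtain ⟨δ, ⟨hδ, γ, rfl⟩, hmin⟩ :=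
    WellFounded.has_min Ordinal.lt_wf {δ | δ ≠ 0 ∧ ∃ γ, β = γ + δ} ⟨β, hβ, 0, (zero_add β).symm⟩
  have hprin : IsPrincipal (· + ·) δ := by
    by_contra hnp
    obtain ⟨b, hb, c, hc, rfl⟩ := exists_lt_add_of_not_isPrincipal_add hnp
    refine hmin c ⟨fun h => ?_, γ + b, (add_assoc _ _ _).symm⟩ hc
    simp [h] at hb
  obtain ⟨b, rfl⟩ := (isPrincipal_add_iff_zero_or_omega0_opow.1 hprin).resolve_left hδ
  exact ⟨γ, b, rfl⟩

theorem add_omega0_opow_le_of_lt {a c γ : Ordinal.{u}} (hγ : γ < a + ω ^ c) :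
    γ + ω ^ c ≤ a + ω ^ c := by
  rcases le_or_gt γ a with h | h
  · exact add_le_add_left h _
  · obtain ⟨δ, rfl⟩ := exists_add_of_le h.le
    rw [add_assoc, add_omega0_opow (lt_of_add_lt_add_left hγ)]

theorem ellFun_add_omega0_opow (a b : Ordinal.{u}) : ellFun (a + ω ^ b) = b := by
  have hle : ∀ {a b a' b' : Ordinal.{u}}, a + ω ^ b = a' + ω ^ b' → b ≤ b' := by
    intro a b a' b' h
    have ha' : a' < a + ω ^ b := h ▸ lt_add_of_pos_right a' (opow_pos b' omega0_pos)
    have := (add_omega0_opow_le_of_lt ha').trans_eq h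
    exact (opow_le_opow_iff_right one_lt_omega0).1 (le_of_add_le_add_left this)
  have hne : a + ω ^ b ≠ 0 := (lt_add_of_pos_right a (opow_pos b omega0_pos)).ne_bot
  rw [ellFun, if_neg hne]
  refine le_antisymm (csInf_le' ⟨a, rfl⟩) (le_csInf ⟨b, a, rfl⟩ ?_)
  rintro b' ⟨a', h⟩
  exact hle h

theorem exists_eq_add_omega0_opow_ellFun {β : Ordinal.{u}} (hβ : β ≠ 0) :
    ∃ a, β = a + ω ^ ellFun β := by
  obtain ⟨a, b, rfl⟩ := exists_eq_add_omega0_opow hβ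
  exact ⟨a, by rw [ellFun_add_omega0_opow]⟩

theorem ellFun_lt_ellFun {a w β : Ordinal.{u}} (hβ : β = a + ω ^ ellFun β) (haw : a < w)
    (hwβ : w < β) : ellFun w < ellFun β := by
  obtain ⟨δ, rfl⟩ := exists_add_of_le haw.le
  have hδ : δ ≠ 0 := by rintro rfl; simp at haw
  obtain ⟨c, hc⟩ := exists_eq_add_omega0_opow_ellFun hδ
  rw [hc, ← add_assoc, ellFun_add_omega0_opow]
  have hδβ : δ < ω ^ ellFun β := lt_of_add_lt_add_left (hβ ▸ hwβ)
  refine (opow_lt_opow_iff_right one_lt_omega0).1 (lt_of_le_of_lt ?_ hδβ)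
  exact le_add_self.trans_eq hc.symm

theorem add_omega0_opow_lt {a v β : Ordinal.{u}} (haβ : a < β) (hv : v < ellFun β) :
    a + ω ^ v < β := by
  have hβ : β ≠ 0 := haβ.ne_bot
  obtain ⟨c, hc⟩ := exists_eq_add_omega0_opow_ellFun hβ
  have hpow : ω ^ v < ω ^ ellFun β := (opow_lt_opow_iff_right one_lt_omega0).2 hv
  rcases le_or_gt a c with h | h
  · calc a + ω ^ v ≤ c + ω ^ v := add_le_add_left h _
      _ < β := hc ▸ add_lt_add_right hpow c
  · obtain ⟨δ, rfl⟩ := exists_add_of_le h.le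
    have hδ : δ < ω ^ ellFun β := lt_of_add_lt_add_left (hc ▸ haβ)
    rw [add_assoc, hc]
    exact add_lt_add_right (isPrincipal_add_omega0_opow _ hδ hpow) c

section InitialFunctions

variable {f g : Ordinal.{u} → Ordinal.{u}}

theorem apply_le_self_of_forall_exists_lt_eq (hf : ∀ x, ∀ v < f x, ∃ y < x, f y = v)
    (x : Ordinal.{u}) : f x ≤ x := by
  induction x using WellFoundedLT.induction with
  | _ x ih =>
    by_contra! hx
    obtain ⟨y, hy, hfy⟩ := hf x x hx
    exact (hfy ▸ ih y hy).not_gt hy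

theorem isInitialFun_iff : IsInitialFun f ↔ ∀ x, ∀ v < f x, ∃ y < x, f y = v := by
  constructor
  · intro hf x v hv
    obtain ⟨o, ho⟩ := hf (Order.succ x)
    have hfx : f x ∈ f '' Iio (Order.succ x) := mem_image_of_mem f (Order.lt_succ x)
    rw [ho] at hfx
    obtain ⟨y, hy, rfl⟩ := ho ▸ (show v ∈ Iio o from hv.trans hfx)
    exact ⟨y, (Order.lt_succ_iff.1 hy).lt_of_ne (by rintro rfl; exact hv.false), rfl⟩
  · intro hf o
    have hcompl : (f '' Iio o)ᶜ.Nonempty :=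
      ⟨o, fun ⟨x, hx, hfx⟩ => (hfx ▸ apply_le_self_of_forall_exists_lt_eq hf x).not_gt hx⟩
    refine ⟨sInf (f '' Iio o)ᶜ, Subset.antisymm (fun v hv => ?_) fun v hv => ?_⟩
    · obtain ⟨x, hx, rfl⟩ := hv
      rw [mem_Iio]
      by_contra! hge
      apply csInf_mem hcompl
      rcases hge.lt_or_eq with hlt | heq
      · obtain ⟨y, hy, hfy⟩ := hf x _ hlt
        exact ⟨y, hy.trans hx, hfy⟩
      · exact ⟨x, hx, heq.symm⟩
    · by_contra hv'
      exact notMem_of_lt_csInf' (mem_Iio.1 hv) hv'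

theorem IsInitialFun.apply_le (hf : IsInitialFun f) (x : Ordinal.{u}) : f x ≤ x :=
  apply_le_self_of_forall_exists_lt_eq (isInitialFun_iff.1 hf) x

theorem IsInitialFun.comp (hf : IsInitialFun f) (hg : IsInitialFun g) : IsInitialFun (f ∘ g) := by
  rw [isInitialFun_iff] at *
  intro x v hv
  obtain ⟨y, hy, rfl⟩ := hf (g x) v hv
  obtain ⟨z, hz, rfl⟩ := hg x y hy
  exact ⟨z, hz, rfl⟩

theorem isInitialFun_id : IsInitialFun (id : Ordinal.{u} → Ordinal.{u}) :=
  isInitialFun_iff.2 fun _ v hv => ⟨v, hv, rfl⟩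

theorem IsInitialFun.iterate (hf : IsInitialFun f) (n : ℕ) : IsInitialFun f^[n] := by
  induction n with
  | zero => exact isInitialFun_id
  | succ n ih => rw [Function.iterate_succ]; exact ih.comp hf

theorem isInitialFun_const_zero : IsInitialFun (fun _ : Ordinal.{u} => (0 : Ordinal.{u})) :=
  isInitialFun_iff.2 fun _ _ hv => absurd hv not_lt_zero

open Classical in
theorem IsInitialFun.ite_mem_add_one (hf : IsInitialFun f) {F : Set Ordinal.{u}}
    {η w : Ordinal.{u}} (hF : ∀ y ∈ F, f y = η) (hw : ∀ y ∈ F, w < y) (hfw : f w = η) :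
    IsInitialFun fun x => if x ∈ F then η + 1 else f x := by
  have hwF : w ∉ F := fun h => (hw w h).false
  rw [isInitialFun_iff] at *
  intro x v hv
  have below : ∀ y ∈ F, y ≤ x → ∃ z < x, (if z ∈ F then η + 1 else f z) = η := fun y hy hyx =>
    ⟨w, (hw y hy).trans_le hyx, by rw [if_neg hwF, hfw]⟩
  by_cases hx : x ∈ F
  · rw [if_pos hx, Order.lt_add_one_iff] at hv
    rcases hv.lt_or_eq with hv | rfl
    · obtain ⟨y, hy, rfl⟩ := hf x v (hF x hx ▸ hv)
      have hyF : y ∉ F := fun h => hv.ne (hF y h)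
      exact ⟨y, hy, if_neg hyF⟩
    · exact below x hx le_rfl
  · rw [if_neg hx] at hv
    obtain ⟨y, hy, rfl⟩ := hf x v hv
    by_cases hyF : y ∈ F
    · rw [hF y hyF]; exact below y hyF hy.le
    · exact ⟨y, hy, if_neg hyF⟩

end InitialFunctions

section HyperlogFamily

variable {L : Ordinal.{u} → Ordinal.{u} → Ordinal.{u}} {lam : Ordinal.{u}}

theorem IsHyperlogFamily.isInitialFun (hL : IsHyperlogFamily L) (a : Ordinal.{u}) :
    IsInitialFun (L a) :=
  hL.1 a

theorem IsHyperlogFamily.one_eq (hL : IsHyperlogFamily L) : L 1 = ellFun :=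
  hL.2.1

theorem IsHyperlogFamily.add_eq (hL : IsHyperlogFamily L) (a b : Ordinal.{u}) :
    L (a + b) = L b ∘ L a :=
  hL.2.2.1 a b

theorem IsHyperlogFamily.maximal (hL : IsHyperlogFamily L)
    {M : Ordinal.{u} → Ordinal.{u} → Ordinal.{u}}
    (hM : ∀ a, IsInitialFun (M a)) (hM1 : M 1 = ellFun) (hMadd : ∀ a b, M (a + b) = M b ∘ M a)
    (a x : Ordinal.{u}) : M a x ≤ L a x :=
  hL.2.2.2 M hM hM1 hMadd a x

theorem IsHyperlogFamily.add_apply (hL : IsHyperlogFamily L) (a b x : Ordinal.{u}) :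
    L (a + b) x = L b (L a x) :=
  congrFun (hL.add_eq a b) x

theorem IsHyperlogFamily.apply_le (hL : IsHyperlogFamily L) (a x : Ordinal.{u}) : L a x ≤ x :=
  (hL.isInitialFun a).apply_le x

theorem IsHyperlogFamily.apply_zero (hL : IsHyperlogFamily L) (a : Ordinal.{u}) : L a 0 = 0 :=
  nonpos_iff_eq_zero.1 (hL.apply_le a 0)

theorem IsHyperlogFamily.zero_eq_id (hL : IsHyperlogFamily L) : L 0 = id := by
  classical
  let M : Ordinal.{u} → Ordinal.{u} → Ordinal.{u} := fun a => if a = 0 then id else L a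
  have hMinit : ∀ a, IsInitialFun (M a) := fun a => by
    by_cases ha : a = 0 <;> simp [M, ha, isInitialFun_id, hL.isInitialFun a]
  have hMadd : ∀ a b, M (a + b) = M b ∘ M a := fun a b => by
    rcases eq_or_ne a 0 with rfl | ha
    · simp [M]
    rcases eq_or_ne b 0 with rfl | hb
    · simp [M, ha]
    simp [M, ha, hb, hL.add_eq]
  funext x
  have hM := hL.maximal hMinit (by simp [M, hL.one_eq]) hMadd 0 x
  exact le_antisymm (hL.apply_le 0 x) (by simpa [M] using hM)

theorem IsHyperlogFamily.apply_apply_of_isPrincipal (hL : IsHyperlogFamily L)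
    (hlam : IsPrincipal (· + ·) lam) {c : Ordinal.{u}} (hc : c < lam) (x : Ordinal.{u}) :
    L lam (L c x) = L lam x := by
  rw [← hL.add_apply, hlam.add_eq_right hc]

theorem IsHyperlogFamily.exists_fixed_of_isPrincipal (hL : IsHyperlogFamily L)
    (hlam : IsPrincipal (· + ·) lam) (h0 : 0 < lam) (β : Ordinal.{u}) :
    ∃ ξ < lam, ∀ c < lam, L c (L ξ β) = L ξ β := by
  have hne : ((fun ξ => L ξ β) '' Iio lam).Nonempty := ⟨_, 0, h0, rfl⟩
  obtain ⟨ξ, hξ, hmin⟩ := csInf_mem hne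
  refine ⟨ξ, hξ, fun c hc => le_antisymm (hL.apply_le _ _) ?_⟩
  rw [← hL.add_apply, show L ξ β = _ from hmin]
  exact csInf_le' ⟨ξ + c, hlam hξ hc, rfl⟩

/-- Agrees with `L` below `lam` and is `g` at `lam`; see `bumpFamily_mul_add`. -/
def bumpFamily (L : Ordinal.{u} → Ordinal.{u} → Ordinal.{u}) (lam : Ordinal.{u})
    (g : Ordinal.{u} → Ordinal.{u}) (a : Ordinal.{u}) : Ordinal.{u} → Ordinal.{u} :=
  if a < lam * ω then L (a % lam) ∘ g^[Cardinal.toNat (a / lam).card] else fun _ => 0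

variable {g : Ordinal.{u} → Ordinal.{u}}

theorem bumpFamily_mul_add {s : Ordinal.{u}} (hs : s < lam) (n : ℕ) :
    bumpFamily L lam g (lam * n + s) = L s ∘ g^[n] := by
  have h0 : lam ≠ 0 := by rintro rfl; exact not_lt_zero hs
  have hlt : lam * n + s < lam * ω :=
    calc lam * n + s < lam * n + lam := add_lt_add_right hs _
      _ = lam * (n + 1 : ℕ) := by push_cast; rw [mul_add_one]
      _ ≤ lam * ω := mul_le_mul_right (natCast_lt_omega0 _).le _
  rw [bumpFamily, if_pos hlt, Ordinal.mul_add_div n h0, Ordinal.div_eq_zero_of_lt hs, add_zero,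
    Ordinal.mul_add_mod_self, Ordinal.mod_eq_of_lt hs, Ordinal.card_nat, Cardinal.toNat_natCast]

theorem bumpFamily_of_lt {s : Ordinal.{u}} (hs : s < lam) : bumpFamily L lam g s = L s := by
  simpa using bumpFamily_mul_add (L := L) (g := g) hs 0

theorem bumpFamily_of_le {a : Ordinal.{u}} (ha : lam * ω ≤ a) :
    bumpFamily L lam g a = fun _ => 0 := by
  rw [bumpFamily, if_neg ha.not_gt]

theorem exists_eq_mul_add_of_lt_mul_omega0 {a : Ordinal.{u}} (ha : a < lam * ω) :
    ∃ (n : ℕ) (s : Ordinal.{u}), s < lam ∧ a = lam * n + s := by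
  have h0 : lam ≠ 0 := by rintro rfl; simp at ha
  obtain ⟨n, hn⟩ := lt_omega0.1 ((Ordinal.lt_mul_iff_div_lt h0).1 ha)
  exact ⟨n, a % lam, Ordinal.mod_lt a h0, by rw [← hn, Ordinal.div_add_mod]⟩

theorem isInitialFun_bumpFamily (hL : IsHyperlogFamily L) (hg : IsInitialFun g)
    (a : Ordinal.{u}) : IsInitialFun (bumpFamily L lam g a) := by
  by_cases ha : a < lam * ω
  · obtain ⟨n, s, hs, rfl⟩ := exists_eq_mul_add_of_lt_mul_omega0 ha
    rw [bumpFamily_mul_add hs]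
    exact (hL.isInitialFun s).comp (hg.iterate n)
  · rw [bumpFamily_of_le (not_lt.1 ha)]
    exact isInitialFun_const_zero

theorem bumpFamily_add (hL : IsHyperlogFamily L) (hlam : IsPrincipal (· + ·) lam)
    (hg0 : g 0 = 0) (habs : ∀ c < lam, ∀ x, g (L c x) = g x) (a b : Ordinal.{u}) :
    bumpFamily L lam g (a + b) = bumpFamily L lam g b ∘ bumpFamily L lam g a := by
  by_cases hb : b < lam * ω; swap
  · rw [bumpFamily_of_le (not_lt.1 hb), bumpFamily_of_le ((not_lt.1 hb).trans le_add_self)]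
    rfl
  obtain ⟨m, u, hu, rfl⟩ := exists_eq_mul_add_of_lt_mul_omega0 hb
  by_cases ha : a < lam * ω; swap
  · rw [bumpFamily_of_le (not_lt.1 ha), bumpFamily_of_le ((not_lt.1 ha).trans le_self_add),
      bumpFamily_mul_add hu]
    funext x
    simp [Function.iterate_fixed hg0, hL.apply_zero]
  obtain ⟨n, s, hs, rfl⟩ := exists_eq_mul_add_of_lt_mul_omega0 ha
  rcases m with _ | m
  · simp only [Nat.cast_zero, mul_zero, zero_add] at hu ⊢
    rw [add_assoc, bumpFamily_mul_add (hlam hs hu), bumpFamily_of_lt hu, bumpFamily_mul_add hs]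
    funext x
    exact hL.add_apply s u _
  · have hsum : lam * n + s + (lam * (m + 1 : ℕ) + u) = lam * (m + 1 + n : ℕ) + u := by
      rw [← add_assoc, add_assoc _ s,
        hlam.add_eq_right_of_le hs (Ordinal.le_mul_left lam (by simp)), ← mul_add,
        ← Nat.cast_add, add_comm n]
    rw [hsum, bumpFamily_mul_add hu, bumpFamily_mul_add hu, bumpFamily_mul_add hs]
    funext x
    simp only [Function.comp_apply]
    rw [Function.iterate_succ_apply, habs s hs, ← Function.iterate_succ_apply,
      ← Function.iterate_add_apply]

theorem IsHyperlogFamily.le_apply_of_absorbs (hL : IsHyperlogFamily L)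
    (hlam : IsPrincipal (· + ·) lam) (h1 : 1 < lam) (hg : IsInitialFun g) (hg0 : g 0 = 0)
    (habs : ∀ c < lam, ∀ x, g (L c x) = g x) (x : Ordinal.{u}) : g x ≤ L lam x := by
  have hM1 : bumpFamily L lam g 1 = ellFun := (bumpFamily_of_lt h1).trans hL.one_eq
  have hMlam : bumpFamily L lam g lam = g := by
    simpa [hL.zero_eq_id] using bumpFamily_mul_add (L := L) (g := g) (zero_lt_one.trans h1) 1
  simpa [hMlam] using hL.maximal (isInitialFun_bumpFamily hL hg) hM1
    (bumpFamily_add hL hlam hg0 habs) lam x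

theorem IsHyperlogFamily.exists_apply_apply_eq_iff (hL : IsHyperlogFamily L)
    (hlam : IsPrincipal (· + ·) lam) {B : Ordinal.{u}} (hB : ∀ c < lam, L c B = B)
    {c : Ordinal.{u}} (hc : c < lam) (x : Ordinal.{u}) :
    (∃ ξ < lam, L ξ (L c x) = B) ↔ ∃ ξ < lam, L ξ x = B := by
  refine ⟨fun ⟨ξ, hξ, h⟩ => ⟨c + ξ, hlam hc hξ, by rwa [hL.add_apply]⟩, ?_⟩
  rintro ⟨ξ, hξ, h⟩
  rcases le_total c ξ with hcξ | hξc
  · obtain ⟨d, rfl⟩ := exists_add_of_le hcξ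
    exact ⟨d, le_add_self.trans_lt hξ, by rwa [← hL.add_apply]⟩
  · obtain ⟨d, rfl⟩ := exists_add_of_le hξc
    refine ⟨0, hc.pos, ?_⟩
    rw [hL.add_apply, h, hB d (le_add_self.trans_lt hc), hB 0 hc.pos]

theorem IsHyperlogFamily.apply_lt_apply_of_isPrincipal (hL : IsHyperlogFamily L)
    (hlam : IsPrincipal (· + ·) lam) (h1 : 1 < lam) {B : Ordinal.{u}}
    (hB : ∀ c < lam, L c B = B) {w : Ordinal.{u}} (hw : w < B) : L lam w < L lam B := by
  classical
  by_contra! hle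
  have h0 : 0 < lam := zero_lt_one.trans h1
  set η := L lam B
  -- Raising `L lam` from `η` to `η + 1` on `F` keeps it initial and absorbing all `L c` with
  -- `c < lam`, against `le_apply_of_absorbs` at `B`.
  let F : Set Ordinal.{u} := {x | ∃ ξ < lam, L ξ x = B}
  have hBF : B ∈ F := ⟨0, h0, hB 0 h0⟩
  have hFB : ∀ y ∈ F, B ≤ y := fun y ⟨ξ, _, hy⟩ => hy ▸ hL.apply_le ξ y
  have hFη : ∀ y ∈ F, L lam y = η := fun y ⟨ξ, hξ, hy⟩ => by
    rw [← hL.apply_apply_of_isPrincipal hlam hξ, hy]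
  have hLF : ∀ c < lam, ∀ x, L c x ∈ F ↔ x ∈ F := fun c hc =>
    hL.exists_apply_apply_eq_iff hlam hB hc
  obtain ⟨w₁, hw₁, hw₁η⟩ : ∃ w₁ < B, L lam w₁ = η := by
    rcases hle.lt_or_eq with hlt | heq
    · obtain ⟨r, hr, hrη⟩ := isInitialFun_iff.1 (hL.isInitialFun lam) w _ hlt
      exact ⟨r, hr.trans hw, hrη⟩
    · exact ⟨w, hw, heq.symm⟩
  have hginit :=
    (hL.isInitialFun lam).ite_mem_add_one hFη (fun y hy => hw₁.trans_le (hFB y hy)) hw₁η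
  have h0F : (0 : Ordinal.{u}) ∉ F := fun h => not_lt_zero (hw.trans_le (hFB 0 h))
  have key := hL.le_apply_of_absorbs hlam h1 hginit (by simp [h0F, hL.apply_zero])
    (fun c hc x => by
      by_cases hx : x ∈ F
      · simp [hx, (hLF c hc x).2 hx]
      · simp [hx, mt (hLF c hc x).1 hx, hL.apply_apply_of_isPrincipal hlam hc]) B
  simp [hBF, η] at key

end HyperlogFamily

section Rank

variable {X : Type u} {t : TopologicalSpace X}

theorem dIter_zero (t : TopologicalSpace X) : dIter t 0 = Set.univ :=
  Ordinal.limitRecOn_zero _ _ _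

theorem dIter_add_one (t : TopologicalSpace X) (o : Ordinal.{u}) :
    dIter t (o + 1) = dSet t (dIter t o) := by
  rw [dIter, Ordinal.limitRecOn_add_one]
  rfl

theorem dIter_of_isSuccLimit (t : TopologicalSpace X) {o : Ordinal.{u}} (ho : Order.IsSuccLimit o) :
    dIter t o = ⋂ o' < o, dIter t o' := by
  rw [dIter, Ordinal.limitRecOn_limit _ _ _ _ ho]
  rfl

structure IsRankFunction (t : TopologicalSpace X) (f : X → Ordinal.{u}) : Prop where
  isolated : ∀ x, ∃ U, IsOpen[t] U ∧ x ∈ U ∧ ∀ y ∈ U, y ≠ x → f y < f x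
  dense : ∀ x U, IsOpen[t] U → x ∈ U → ∀ v < f x, ∃ y ∈ U, f y = v

theorem IsRankFunction.dIter_eq {f : X → Ordinal.{u}} (hf : IsRankFunction t f) (o : Ordinal.{u}) :
    dIter t o = {x | o ≤ f x} := by
  induction o using WellFoundedLT.induction with
  | _ o ih =>
    rcases Ordinal.zero_or_succ_or_isSuccLimit o with rfl | ⟨o, rfl⟩ | ho
    · simp [dIter_zero]
    · rw [Order.succ_eq_add_one, dIter_add_one, ih o (Order.lt_succ o)]
      ext x
      simp only [mem_ofPred_eq, Order.add_one_le_iff]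
      constructor
      · intro hx
        by_contra! hle
        obtain ⟨U, hU, hxU, hiso⟩ := hf.isolated x
        obtain ⟨y, ⟨hyU, hy⟩, hyx⟩ := hx U hU hxU
        exact (hy.trans_lt ((hiso y hyU hyx).trans_le hle)).false
      · intro hx U hU hxU
        obtain ⟨y, hyU, rfl⟩ := hf.dense x U hU hxU o hx
        exact ⟨y, ⟨hyU, le_refl (f y)⟩, by rintro rfl; exact hx.false⟩
    · rw [dIter_of_isSuccLimit t ho]
      ext x
      simp only [mem_iInter, mem_ofPred_eq]
      refine ⟨fun hx => ?_, fun hx o' ho' => (ih o' ho').symm ▸ ho'.le.trans hx⟩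
      by_contra! hlt
      have hmem := hx _ (ho.succ_lt hlt)
      rw [ih _ (ho.succ_lt hlt)] at hmem
      exact (Order.lt_succ (f x)).not_ge hmem

theorem IsRankFunction.ptRank_eq {f : X → Ordinal.{u}} (hf : IsRankFunction t f) :
    ptRank t = f := by
  funext x
  simp only [ptRank, hf.dIter_eq, mem_ofPred_eq, Order.add_one_le_iff, not_lt]
  exact csInf_Ici

theorem dSet_mono (t : TopologicalSpace X) {A B : Set X} (h : A ⊆ B) : dSet t A ⊆ dSet t B :=
  fun _ hx U hU hxU => (hx U hU hxU).imp fun _ ⟨⟨hyU, hyA⟩, hyx⟩ => ⟨⟨hyU, h hyA⟩, hyx⟩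

theorem dSet_dIter_subset (t : TopologicalSpace X) (o : Ordinal.{u}) :
    dSet t (dIter t o) ⊆ dIter t o := by
  induction o using WellFoundedLT.induction with
  | _ o ih =>
    rcases Ordinal.zero_or_succ_or_isSuccLimit o with rfl | ⟨o, rfl⟩ | ho
    · simp [dIter_zero]
    · rw [Order.succ_eq_add_one, dIter_add_one]
      exact dSet_mono t (ih o (Order.lt_succ o))
    · rw [dIter_of_isSuccLimit t ho]
      exact subset_iInter₂ fun o' ho' =>
        (dSet_mono t (iInter₂_subset o' ho')).trans (ih o' ho')

theorem dIter_antitone (t : TopologicalSpace X) : Antitone (dIter t) := by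
  intro o o' h
  induction o' using WellFoundedLT.induction with
  | _ o' ih =>
    rcases h.eq_or_lt with rfl | hlt
    · rfl
    rcases Ordinal.zero_or_succ_or_isSuccLimit o' with rfl | ⟨a, rfl⟩ | ho
    · exact absurd hlt not_lt_zero
    · rw [Order.succ_eq_add_one, dIter_add_one]
      exact (dSet_dIter_subset t a).trans (ih a (Order.lt_succ a) (Order.lt_succ_iff.1 hlt))
    · rw [dIter_of_isSuccLimit t ho]
      exact iInter₂_subset o hlt

theorem IsScattered.exists_dIter_eq_empty (hs : IsScattered t) :
    ∃ o : Ordinal.{u}, dIter t o = ∅ := by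
  by_contra! hne
  -- the iterates would strictly decrease forever, embedding the ordinals into `Set X`
  have hlt : ∀ o, dIter t (o + 1) ⊂ dIter t o := by
    intro o
    refine (dIter_antitone t le_self_add).ssubset_of_ne fun heq => ?_
    obtain ⟨x, hx, U, hU, hUx⟩ := hs _ (hne o)
    have hxU : x ∈ U := (hUx.symm ▸ mem_singleton x : x ∈ U ∩ dIter t o).1
    rw [dIter_add_one] at heq
    obtain ⟨y, hy, hyx⟩ := (heq.symm ▸ hx : x ∈ dSet t (dIter t o)) U hU hxU
    rw [hUx] at hy
    exact hyx hy
  refine not_small_ordinal.{u, u} (small_of_injective (f := dIter t) fun a b hab => ?_)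
  by_contra! hne'
  wlog hab' : a < b generalizing a b
  · exact this b a hab.symm hne'.symm (hne'.lt_or_gt.resolve_left hab')
  exact (hlt a).not_subset (hab ▸ dIter_antitone t (Order.add_one_le_of_lt hab'))

theorem IsScattered.mem_dIter_iff (hs : IsScattered t) {x : X} {o : Ordinal.{u}} :
    x ∈ dIter t o ↔ o ≤ ptRank t x := by
  have hne : {ξ : Ordinal.{u} | x ∉ dIter t (ξ + 1)}.Nonempty := by
    obtain ⟨o, ho⟩ := hs.exists_dIter_eq_empty
    exact ⟨o, fun hx => (ho ▸ dIter_antitone t (Order.le_succ o) hx : x ∈ (∅ : Set X))⟩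
  constructor
  · intro hx
    by_contra! hlt
    exact csInf_mem hne (dIter_antitone t (Order.add_one_le_of_lt hlt) hx)
  · intro ho
    induction o using WellFoundedLT.induction with
    | _ o ih =>
      rcases Ordinal.zero_or_succ_or_isSuccLimit o with rfl | ⟨o, rfl⟩ | hlim
      · simp [dIter_zero]
      · rw [Order.succ_eq_add_one]
        exact not_not.1 (notMem_of_lt_csInf' (Order.succ_le_iff.1 ho))
      · rw [dIter_of_isSuccLimit t hlim]
        exact mem_iInter₂.2 fun o' ho' => ih o' ho' (ho'.le.trans ho)

theorem IsScattered.isRankFunction (hs : IsScattered t) : IsRankFunction t (ptRank t) where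
  isolated x := by
    have hx : x ∉ dSet t (dIter t (ptRank t x)) := by
      rw [← dIter_add_one, hs.mem_dIter_iff]
      exact (Order.lt_add_one_iff.2 le_rfl).not_ge
    simp only [dSet, mem_ofPred_eq, not_forall, not_exists, not_and, not_not] at hx
    obtain ⟨U, hU, hxU, hiso⟩ := hx
    exact ⟨U, hU, hxU, fun y hyU hyx => not_le.1 fun hle =>
      hyx (hiso y ⟨hyU, hs.mem_dIter_iff.2 hle⟩)⟩
  dense x U hU hxU r hr := by
    have hx : x ∈ dSet t (dIter t r) := by
      rw [← dIter_add_one, hs.mem_dIter_iff]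
      exact Order.add_one_le_of_lt hr
    obtain ⟨y₀, hy₀, -⟩ := hx U hU hxU
    obtain ⟨y, hy, W, hW, hWy⟩ := hs (U ∩ dIter t r) ⟨y₀, hy₀⟩
    refine ⟨y, hy.1, (hs.mem_dIter_iff.1 hy.2).antisymm' (not_lt.1 fun hlt => ?_)⟩
    have hyW : y ∈ W := (hWy.symm ▸ mem_singleton y : y ∈ W ∩ (U ∩ dIter t r)).1
    have hy' : y ∈ dSet t (dIter t r) := by
      rw [← dIter_add_one, hs.mem_dIter_iff]
      exact Order.add_one_le_of_lt hlt
    obtain ⟨z, ⟨⟨hzW, hzU⟩, hz⟩, hzy⟩ := hy' (W ∩ U) (t.isOpen_inter _ _ hW hU) ⟨hyW, hy.1⟩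
    exact hzy (hWy ▸ ⟨hzW, hzU, hz⟩ : z ∈ ({y} : Set X))

theorem IsScattered.mono {t' : TopologicalSpace X} (hs : IsScattered t) (h : t' ≤ t) :
    IsScattered t' := fun A hA =>
  let ⟨x, hx, U, hU, hUx⟩ := hs A hA
  ⟨x, hx, U, IsOpen.mono (t₂ := t) hU h, hUx⟩

end Rank

section IcardTopology

variable {X : Type u} {L : Ordinal.{u} → Ordinal.{u} → Ordinal.{u}}

theorem generateFrom_preimage_Iic_Ioc_eq_induced (f : X → Ordinal.{u}) :
    TopologicalSpace.generateFrom {S : Set X | (∃ b, S = {x | f x ≤ b}) ∨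
      ∃ a b, a < b ∧ S = {x | a < f x ∧ f x ≤ b}} =
    TopologicalSpace.induced f inferInstance := by
  set G := {S : Set X | (∃ b, S = {x | f x ≤ b}) ∨ ∃ a b, a < b ∧ S = {x | a < f x ∧ f x ≤ b}}
  refine le_antisymm ?_ (le_generateFrom ?_)
  · change _ ≤ TopologicalSpace.induced f (Preorder.topology Ordinal.{u})
    rw [Preorder.topology, induced_generateFrom_eq]
    refine le_generateFrom ?_
    let _ := TopologicalSpace.generateFrom G
    rintro _ ⟨_, ⟨a, rfl | rfl⟩, rfl⟩
    · have : f ⁻¹' Ioi a = ⋃ b ∈ Ioi a, {x | a < f x ∧ f x ≤ b} := by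
        ext x; simpa using fun h : a < f x => ⟨f x, h, le_rfl⟩
      rw [this]
      exact isOpen_biUnion fun b hb =>
        TopologicalSpace.isOpen_generateFrom_of_mem (Or.inr ⟨a, b, hb, rfl⟩)
    · have : f ⁻¹' Iio a = ⋃ b ∈ Iio a, {x | f x ≤ b} := by
        ext x; simpa using ⟨fun h => ⟨f x, h, le_rfl⟩, fun ⟨b, hb, h⟩ => h.trans_lt hb⟩
      rw [this]
      exact isOpen_biUnion fun b _ => TopologicalSpace.isOpen_generateFrom_of_mem (Or.inl ⟨b, rfl⟩)
  · let _ := TopologicalSpace.induced f inferInstance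
    rintro _ (⟨b, rfl⟩ | ⟨a, b, -, rfl⟩)
    · change IsOpen (f ⁻¹' Iic b)
      rw [← Order.Iio_succ]
      exact isOpen_induced isOpen_Iio
    · change IsOpen (f ⁻¹' Ioc a b)
      rw [← Order.Ioo_succ_right]
      exact isOpen_induced isOpen_Ioo

theorem IcardTop_eq (L : Ordinal.{u} → Ordinal.{u} → Ordinal.{u}) (t : TopologicalSpace X)
    (lam : Ordinal.{u}) : IcardTop L t lam =
      t ⊓ ⨅ ξ < lam, TopologicalSpace.induced (fun x => L ξ (ptRank t x)) inferInstance := by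
  have hunion : {S : Set X | ∃ ξ < lam, (∃ b, S = {x | L ξ (ptRank t x) ≤ b}) ∨
      ∃ a b, a < b ∧ S = {x | a < L ξ (ptRank t x) ∧ L ξ (ptRank t x) ≤ b}} =
      ⋃ ξ, ⋃ (_ : ξ < lam), {S : Set X | (∃ b, S = {x | L ξ (ptRank t x) ≤ b}) ∨
        ∃ a b, a < b ∧ S = {x | a < L ξ (ptRank t x) ∧ L ξ (ptRank t x) ≤ b}} := by
    ext S
    simp
  simp only [IcardTop, hunion, generateFrom_iUnion,
    generateFrom_preimage_Iic_Ioc_eq_induced]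

variable {t : TopologicalSpace X} {lam : Ordinal.{u}}

theorem IcardTop_zero : IcardTop L t 0 = t := by
  simp [IcardTop_eq]

theorem IcardTop_le : IcardTop L t lam ≤ t :=
  inf_le_left

theorem IcardTop_anti {ξ : Ordinal.{u}} (h : ξ ≤ lam) : IcardTop L t lam ≤ IcardTop L t ξ := by
  rw [IcardTop_eq, IcardTop_eq]
  exact inf_le_inf_left _ (biInf_mono fun _ h' => h'.trans_le h)

theorem IcardTop_one (hL0 : L 0 = id) :
    IcardTop L t 1 = t ⊓ TopologicalSpace.induced (ptRank t) inferInstance := by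
  simp [IcardTop_eq, hL0]

theorem IcardTop_eq_iInf_of_isSuccLimit (hlam : Order.IsSuccLimit lam) :
    IcardTop L t lam = ⨅ ξ < lam, IcardTop L t ξ := by
  refine le_antisymm (le_iInf₂ fun ξ hξ => IcardTop_anti hξ.le) ?_
  conv_rhs => rw [IcardTop_eq]
  refine le_inf (iInf₂_le_of_le 0 hlam.pos IcardTop_le) (le_iInf₂ fun ξ hξ => ?_)
  refine iInf₂_le_of_le _ (hlam.succ_lt hξ) ?_
  rw [IcardTop_eq]
  exact inf_le_right.trans (iInf₂_le ξ (Order.lt_succ ξ))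

theorem exists_isOpen_IcardTop_of_isSuccLimit (hlam : Order.IsSuccLimit lam) {V : Set X}
    (hV : IsOpen[IcardTop L t lam] V) {x : X} (hx : x ∈ V) :
    ∃ ξ < lam, ∃ W, IsOpen[IcardTop L t ξ] W ∧ x ∈ W ∧ W ⊆ V := by
  have hnhds := @IsOpen.mem_nhds X (IcardTop L t lam) x V hV hx
  have : Nonempty {ξ // ξ < lam} := ⟨⟨0, hlam.pos⟩⟩
  rw [IcardTop_eq_iInf_of_isSuccLimit hlam, iInf_subtype', nhds_iInf,
    Filter.mem_iInf_of_directed] at hnhds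
  · obtain ⟨⟨ξ, hξ⟩, hmem⟩ := hnhds
    obtain ⟨W, hWV, hW, hxW⟩ := (@mem_nhds_iff X (IcardTop L t ξ) x V).1 hmem
    exact ⟨ξ, hξ, W, hW, hxW, hWV⟩
  · exact fun a b => ⟨⟨max a b, max_lt a.2 b.2⟩, nhds_mono (IcardTop_anti (le_max_left _ _)),
      nhds_mono (IcardTop_anti (le_max_right _ _))⟩

theorem biInf_lt_add_eq_inf {α : Type*} [CompleteLattice α] (f : Ordinal.{u} → α)
    (a b : Ordinal.{u}) : ⨅ ξ < a + b, f ξ = (⨅ ξ < a, f ξ) ⊓ ⨅ ξ < b, f (a + ξ) := by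
  refine le_antisymm (le_inf (biInf_mono fun ξ h => h.trans_le le_self_add)
    (le_iInf₂ fun ξ h => iInf₂_le (a + ξ) (add_lt_add_right h a))) (le_iInf₂ fun ξ h => ?_)
  rcases lt_or_ge ξ a with hξ | hξ
  · exact inf_le_left.trans (iInf₂_le ξ hξ)
  · obtain ⟨d, rfl⟩ := exists_add_of_le hξ
    have hd : d < b := lt_of_add_lt_add_left h
    exact inf_le_right.trans (iInf₂_le d hd)

theorem IcardTop_IcardTop_of_ptRank (hadd : ∀ a b, L (a + b) = L b ∘ L a)
    (hρ : ptRank (IcardTop L t lam) = L lam ∘ ptRank t) (mu : Ordinal.{u}) :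
    IcardTop L (IcardTop L t lam) mu = IcardTop L t (lam + mu) := by
  rw [IcardTop_eq L (IcardTop L t lam), hρ, IcardTop_eq L t lam, IcardTop_eq L t (lam + mu),
    biInf_lt_add_eq_inf, inf_assoc]
  simp [hadd]

end IcardTopology

section IcardRank

variable {X : Type u} {t : TopologicalSpace X} {L : Ordinal.{u} → Ordinal.{u} → Ordinal.{u}}
  {lam : Ordinal.{u}}

theorem IsScattered.isRankFunction_inf_induced_ptRank (hs : IsScattered t) :
    IsRankFunction (t ⊓ TopologicalSpace.induced (ptRank t) inferInstance)
      (ellFun ∘ ptRank t) where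
  isolated x := by
    obtain ⟨U, hU, hxU, hiso⟩ := hs.isRankFunction.isolated x
    let τ := t ⊓ TopologicalSpace.induced (ptRank t) inferInstance
    have hU' : IsOpen[τ] U := IsOpen.mono (t₂ := t) hU inf_le_left
    rcases eq_or_ne (ptRank t x) 0 with h0 | h0
    · exact ⟨U, hU', hxU, fun y hyU hyx => absurd (h0 ▸ hiso y hyU hyx) not_lt_zero⟩
    obtain ⟨a, ha⟩ := exists_eq_add_omega0_opow_ellFun h0
    have hW : IsOpen[τ] (ptRank t ⁻¹' Ioi a) :=
      IsOpen.mono (isOpen_induced isOpen_Ioi) inf_le_right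
    refine ⟨U ∩ ptRank t ⁻¹' Ioi a, τ.isOpen_inter _ _ hU' hW,
      ⟨hxU, (lt_add_of_pos_right a (opow_pos _ omega0_pos)).trans_eq ha.symm⟩, fun y hy hyx => ?_⟩
    exact ellFun_lt_ellFun ha hy.2 (hiso y hy.1 hyx)
  dense x V hV hxV v hv := by
    have h0 : ptRank t x ≠ 0 := by
      intro h
      simp [h, ellFun] at hv
    have hV' := @IsOpen.mem_nhds X (t ⊓ _) x V hV hxV
    rw [nhds_inf, nhds_induced, Filter.mem_inf_iff] at hV'
    obtain ⟨U, hU, W, hW, rfl⟩ := hV'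
    obtain ⟨W', hW', hW'W⟩ := Filter.mem_comap.1 hW
    obtain ⟨a, ha, haW'⟩ := (mem_nhdsLE_iff_exists_Ioc_subset' (pos_iff_ne_zero.2 h0)).1
      (mem_nhdsWithin_of_mem_nhds hW')
    obtain ⟨U', hU'U, hU', hxU'⟩ := (@mem_nhds_iff X t x U).1 hU
    have hlt := add_omega0_opow_lt ha hv
    obtain ⟨y, hyU', hy⟩ := hs.isRankFunction.dense x U' hU' hxU' _ hlt
    refine ⟨y, ⟨hU'U hyU', hW'W (haW' ⟨?_, ?_⟩)⟩, ?_⟩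
    · exact hy ▸ lt_add_of_pos_right a (opow_pos v omega0_pos)
    · exact hy ▸ hlt.le
    · simp [hy, ellFun_add_omega0_opow]

theorem isRankFunction_IcardTop_of_isPrincipal (hL : IsHyperlogFamily L)
    (hlam : IsPrincipal (· + ·) lam) (h1 : 1 < lam) (hs : IsScattered t)
    (ih : ∀ ξ < lam, ptRank (IcardTop L t ξ) = L ξ ∘ ptRank t) :
    IsRankFunction (IcardTop L t lam) (L lam ∘ ptRank t) where
  isolated x := by
    obtain ⟨ξ, hξ, hfix⟩ := hL.exists_fixed_of_isPrincipal hlam (zero_lt_one.trans h1) (ptRank t x)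
    have hrank := (hs.mono (IcardTop_le (L := L) (lam := ξ))).isRankFunction
    rw [ih ξ hξ] at hrank
    obtain ⟨U, hU, hxU, hiso⟩ := hrank.isolated x
    refine ⟨U, IsOpen.mono hU (IcardTop_anti hξ.le), hxU, fun y hyU hyx => ?_⟩
    have := hL.apply_lt_apply_of_isPrincipal hlam h1 hfix (hiso y hyU hyx)
    simpa [hL.apply_apply_of_isPrincipal hlam hξ] using this
  dense x V hV hxV v hv := by
    obtain ⟨ξ, hξ, W, hW, hxW, hWV⟩ :=
      exists_isOpen_IcardTop_of_isSuccLimit (isSuccLimit_of_isPrincipal_add h1 hlam) hV hxV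
    rw [Function.comp_apply, ← hL.apply_apply_of_isPrincipal hlam hξ] at hv
    obtain ⟨w, hw, rfl⟩ := isInitialFun_iff.1 (hL.isInitialFun lam) _ v hv
    have hrank := (hs.mono (IcardTop_le (L := L) (lam := ξ))).isRankFunction
    rw [ih ξ hξ] at hrank
    obtain ⟨y, hyW, hy⟩ := hrank.dense x W hW hxW w hw
    exact ⟨y, hWV hyW, by simp [← hy, hL.apply_apply_of_isPrincipal hlam hξ]⟩

theorem ptRank_IcardTop (hL : IsHyperlogFamily L) (hs : IsScattered t) (lam : Ordinal.{u}) :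
    ptRank (IcardTop L t lam) = L lam ∘ ptRank t := by
  induction lam using WellFoundedLT.induction generalizing X t with
  | _ lam ih =>
  rcases eq_or_ne lam 0 with rfl | h0
  · rw [IcardTop_zero, hL.zero_eq_id]
    rfl
  by_cases hlam : IsPrincipal (· + ·) lam
  · rcases (Order.one_le_iff_pos.2 (pos_iff_ne_zero.2 h0)).eq_or_lt with rfl | h1
    · rw [IcardTop_one hL.zero_eq_id, hL.one_eq]
      exact hs.isRankFunction_inf_induced_ptRank.ptRank_eq
    · exact (isRankFunction_IcardTop_of_isPrincipal hL hlam h1 hs fun ξ hξ => ih ξ hξ hs).ptRank_eq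
  · obtain ⟨a, ha, b, hb, rfl⟩ := exists_lt_add_of_not_isPrincipal_add hlam
    rw [← IcardTop_IcardTop_of_ptRank hL.add_eq (ih a ha hs), ih b hb (hs.mono IcardTop_le),
      ih a ha hs, hL.add_eq]
    rfl

end IcardRank

/-- For a scattered space `(X, τ)` and ordinals `λ, μ`:
`(τ_λ)_μ = τ_{λ+μ}`. -/
theorem Icard_Icard_eq_Icard_add {X : Type u} (t : TopologicalSpace X)
    (hscat : IsScattered t)
    (L : Ordinal.{u} → Ordinal.{u} → Ordinal.{u}) (hL : IsHyperlogFamily L)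
    (lam mu : Ordinal.{u}) :
    IcardTop L (IcardTop L t lam) mu = IcardTop L t (lam + mu) :=
  IcardTop_IcardTop_of_ptRank hL.add_eq (ptRank_IcardTop hL hscat lam) mu

end
end

section
/- Let ξ be an ordinal, λ an additively indecomposable limit ordinal, and f an ordinal-valued function on [0, λ) such that 0 < f(η) < e^λ(ξ+1) for all η < λ. Then lim_{η→λ} e^η(e^λ(ξ) + f(η)) = e^λ(ξ+1): for every ζ < e^λ(ξ+1) there is δ < λ such that e^η(e^λ(ξ) + f(η)) ∈ (ζ, e^λ(ξ+1)] for all η with δ < η < λ. -/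
open Ordinal Set

noncomputable section

universe u

/-- An ordinal is additively indecomposable if it is nonzero and closed under addition of
smaller ordinals. -/
def AddIndecomposable (o : Ordinal.{u}) : Prop :=
  0 < o ∧ ∀ a < o, ∀ b < o, a + b < o


/-! The hyperexponentials can be written down by transfinite recursion: `e^α = e^{ω^ρ} ∘ e^{α'}`
when `α = ω^ρ + α'` with `ω^ρ` the leading term, and for indecomposable `α > 1` the function
`e^α` enumerates the common fixed points of the `e^β`, `β < α`. This family satisfies the
defining equations and lies below every other such family, so it is the family `E`.

For `ζ < e^λ(ξ+1)`, the value `e^λ(ξ+1)` is the next common fixed point of the `e^β` above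
`e^λ(ξ)`, hence a supremum of finite compositions of them applied to `e^λ(ξ) + 1`; as `λ` is
indecomposable, such a composition is a single `e^δ` with `δ < λ`, giving
`ζ < e^δ(e^λ(ξ) + 1) ≤ e^η(e^λ(ξ) + f(η))` for `δ < η`. Conversely `e^λ(ξ+1)` is fixed by `e^1`,
so it is a power `ω^·` of itself and thus indecomposable; it bounds `e^λ(ξ) + f(η)`, and `e^η`
fixes it. -/

section Hyperexponential

open Order

theorem eFun_zero : eFun 0 = 0 := by
  rw [eFun, opow_zero, Ordinal.sub_self]

theorem eFun_of_ne_zero {x : Ordinal} (hx : x ≠ 0) : eFun x = ω ^ x := by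
  have h1 : (1 : Ordinal) < ω ^ x :=
    one_lt_omega0.trans_le (left_le_opow ω (pos_iff_ne_zero.2 hx))
  rw [eFun, ← add_omega0_opow h1, Ordinal.add_sub_cancel, add_omega0_opow h1]

theorem isNormal_eFun : Order.IsNormal eFun := by
  refine isNormal_iff.2 ⟨fun a b hab => ?_, fun o ho a h => ?_⟩
  · rw [eFun_of_ne_zero hab.ne_bot]
    rcases eq_or_ne a 0 with rfl | ha
    · rw [eFun_zero]; exact opow_pos b omega0_pos
    · exact eFun_of_ne_zero ha ▸ (opow_lt_opow_iff_right one_lt_omega0).2 hab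
  · rw [eFun_of_ne_zero ho.ne_bot, opow_le_of_isSuccLimit omega0_ne_zero ho]
    intro b hb
    calc ω ^ b ≤ ω ^ (b + 1) := opow_le_opow_right omega0_pos (le_self_add ..)
      _ = eFun (b + 1) := (eFun_of_ne_zero (add_pos_of_right zero_lt_one b).ne').symm
      _ ≤ a := h _ (ho.add_one_lt hb)

theorem derivFamily_le_of_forall_map_le {ι : Type*} [Small.{u} ι]
    {f : ι → Ordinal.{u} → Ordinal.{u}} (hf : ∀ i, Order.IsNormal (f i))
    {g : Ordinal.{u} → Ordinal.{u}} (hg : StrictMono g) (hfix : ∀ i b, f i (g b) ≤ g b) :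
    derivFamily f ≤ g := by
  rw [derivFamily_eq_enumOrd hf, ← enumOrd_range hg]
  refine enumOrd_le_of_subset hg.not_bddAbove_range_of_wellFoundedLT ?_
  rintro _ ⟨b, rfl⟩
  exact mem_iInter.2 fun i => (hfix i b).antisymm (hf i).strictMono.le_apply

theorem ne_zero_of_not_isPrincipal_add {α : Ordinal} (hα : ¬ IsPrincipal (· + ·) α) : α ≠ 0 :=
  fun h => hα (h ▸ isPrincipal_zero)

theorem omega0_opow_log_lt_of_not_isPrincipal_add {α : Ordinal}
    (hα : ¬ IsPrincipal (· + ·) α) : ω ^ log ω α < α :=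
  (opow_log_le_self ω (ne_zero_of_not_isPrincipal_add hα)).lt_of_ne
    fun h => hα (h ▸ isPrincipal_add_omega0_opow _)

open Classical in
def hexp (α : Ordinal.{u}) : Ordinal.{u} → Ordinal.{u} :=
  if α = 0 then id
  else if α = 1 then eFun
  else if IsPrincipal (· + ·) α then derivFamily fun β : Iio α => hexp β
  else hexp (ω ^ log ω α) ∘ hexp (α - ω ^ log ω α)
termination_by α
decreasing_by
  · exact β.2
  · exact omega0_opow_log_lt_of_not_isPrincipal_add ‹_›
  · exact sub_omega0_opow_log_lt ‹α ≠ 0›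

theorem hexp_zero : hexp 0 = id := by
  rw [hexp, if_pos rfl]

theorem hexp_one : hexp 1 = eFun := by
  rw [hexp, if_neg one_ne_zero, if_pos rfl]

theorem hexp_of_isPrincipal {α : Ordinal} (hα : IsPrincipal (· + ·) α) (h1 : 1 < α) :
    hexp α = derivFamily fun β : Iio α => hexp β := by
  rw [hexp, if_neg (zero_lt_one.trans h1).ne', if_neg h1.ne', if_pos hα]

theorem hexp_of_not_isPrincipal {α : Ordinal} (hα : ¬ IsPrincipal (· + ·) α) :
    hexp α = hexp (ω ^ log ω α) ∘ hexp (α - ω ^ log ω α) := by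
  have h1 : α ≠ 1 := fun h => hα (h ▸ isPrincipal_add_one)
  rw [hexp, if_neg (ne_zero_of_not_isPrincipal_add hα), if_neg h1, if_neg hα]

theorem isNormal_hexp (α : Ordinal.{u}) : Order.IsNormal (hexp α) := by
  induction α using WellFoundedLT.induction with
  | _ α IH =>
  by_cases hα : IsPrincipal (· + ·) α
  · rcases lt_trichotomy α 1 with hα1 | rfl | hα1
    · rw [lt_one_iff.1 hα1, hexp_zero]
      exact .id
    · exact hexp_one ▸ isNormal_eFun
    · exact hexp_of_isPrincipal hα hα1 ▸ isNormal_derivFamily _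
  · rw [hexp_of_not_isPrincipal hα]
    exact (IH _ (omega0_opow_log_lt_of_not_isPrincipal_add hα)).comp
      (IH _ (sub_omega0_opow_log_lt (ne_zero_of_not_isPrincipal_add hα)))

theorem hexp_hexp_of_lt {α β : Ordinal} (hα : IsPrincipal (· + ·) α) (hβ : β < α)
    (x : Ordinal) : hexp β (hexp α x) = hexp α x := by
  rcases le_or_gt α 1 with hα1 | hα1
  · rw [lt_one_iff.1 (hβ.trans_le hα1), hexp_zero, id]
  · rw [hexp_of_isPrincipal hα hα1]
    exact derivFamily_fp (f := fun β : Iio α => hexp β) (i := ⟨β, hβ⟩) (isNormal_hexp β) x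

theorem hexp_eq_comp_leading {α : Ordinal} (hα : α ≠ 0) :
    hexp α = hexp (ω ^ log ω α) ∘ hexp (α - ω ^ log ω α) := by
  by_cases hp : IsPrincipal (· + ·) α
  · obtain ⟨γ, rfl⟩ := (isPrincipal_add_iff_zero_or_omega0_opow.1 hp).resolve_left hα
    rw [log_opow one_lt_omega0, Ordinal.sub_self, hexp_zero, Function.comp_id]
  · exact hexp_of_not_isPrincipal hp

theorem log_omega0_opow_add {γ b : Ordinal} (hb : b < ω ^ (γ + 1)) :
    log ω (ω ^ γ + b) = γ := by
  have hγ : ω ^ γ < ω ^ (γ + 1) := (opow_lt_opow_iff_right one_lt_omega0).2 (lt_add_one γ)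
  have hne : ω ^ γ + b ≠ 0 := ((opow_pos γ omega0_pos).trans_le le_self_add).ne'
  exact (log_eq_iff one_lt_omega0 hne γ).2 ⟨le_self_add, isPrincipal_add_omega0_opow _ hγ hb⟩

theorem hexp_omega0_opow_add (γ b : Ordinal) : hexp (ω ^ γ + b) = hexp (ω ^ γ) ∘ hexp b := by
  rcases eq_or_ne b 0 with rfl | hb
  · rw [add_zero, hexp_zero, Function.comp_id]
  rcases le_or_gt (log ω b) γ with hlog | hlog
  · have hb' : b < ω ^ (γ + 1) := (lt_opow_iff_log_lt one_lt_omega0 hb).2 (lt_add_one_iff.2 hlog)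
    have hne : ω ^ γ + b ≠ 0 := ((opow_pos γ omega0_pos).trans_le le_self_add).ne'
    rw [hexp_eq_comp_leading hne, log_omega0_opow_add hb', Ordinal.add_sub_cancel]
  · have hlt : ω ^ γ < ω ^ log ω b := (opow_lt_opow_iff_right one_lt_omega0).2 hlog
    rw [add_of_omega0_opow_le hlt (opow_log_le_self ω hb), hexp_eq_comp_leading hb]
    funext x
    exact (hexp_hexp_of_lt (isPrincipal_add_omega0_opow _) hlt _).symm

theorem hexp_add (a b : Ordinal.{u}) : hexp (a + b) = hexp a ∘ hexp b := by
  induction a using WellFoundedLT.induction with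
  | _ a IH =>
  rcases eq_or_ne a 0 with rfl | ha
  · rw [zero_add, hexp_zero, Function.id_comp]
  conv_lhs => rw [← Ordinal.add_sub_cancel_of_le (opow_log_le_self ω ha), add_assoc,
    hexp_omega0_opow_add, IH _ (sub_omega0_opow_log_lt ha)]
  rw [hexp_eq_comp_leading ha]
  rfl

theorem hexp_le_of_family {F : Ordinal.{u} → Ordinal.{u} → Ordinal.{u}}
    (hN : ∀ a, Order.IsNormal (F a)) (hone : F 1 = eFun) (hadd : ∀ a b, F (a + b) = F a ∘ F b)
    (a : Ordinal.{u}) : hexp a ≤ F a := by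
  induction a using WellFoundedLT.induction with
  | _ a IH =>
  by_cases hα : IsPrincipal (· + ·) a
  · rcases lt_trichotomy a 1 with ha1 | rfl | ha1
    · rw [lt_one_iff.1 ha1, hexp_zero]
      exact fun b => (hN 0).strictMono.le_apply
    · rw [hexp_one, hone]
    · rw [hexp_of_isPrincipal hα ha1]
      refine derivFamily_le_of_forall_map_le (fun β : Iio a => isNormal_hexp β) (hN a).strictMono
        fun β b => ?_
      calc hexp β (F a b) ≤ F β (F a b) := IH β β.2 _
        _ = F a b := by rw [← Function.comp_apply (f := F β), ← hadd, hα.add_eq_right β.2]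
  · have ha0 := ne_zero_of_not_isPrincipal_add hα
    rw [hexp_of_not_isPrincipal hα]
    intro b
    calc hexp (ω ^ log ω a) (hexp (a - ω ^ log ω a) b)
        ≤ hexp (ω ^ log ω a) (F (a - ω ^ log ω a) b) :=
          (isNormal_hexp _).monotone (IH _ (sub_omega0_opow_log_lt ha0) b)
      _ ≤ F (ω ^ log ω a) (F (a - ω ^ log ω a) b) :=
          IH _ (omega0_opow_log_lt_of_not_isPrincipal_add hα) _
      _ = F a b := by
          rw [← Function.comp_apply (f := F _), ← hadd,
            Ordinal.add_sub_cancel_of_le (opow_log_le_self ω ha0)]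

theorem isHyperexpFamily_hexp : IsHyperexpFamily hexp :=
  ⟨isNormal_hexp, hexp_one, hexp_add, fun _ hN hone hadd a => hexp_le_of_family hN hone hadd a⟩

theorem IsHyperexpFamily.unique {E E' : Ordinal.{u} → Ordinal.{u} → Ordinal.{u}}
    (hE : IsHyperexpFamily E) (hE' : IsHyperexpFamily E') : E = E' :=
  funext₂ fun a b => (hE.2.2.2 E' hE'.1 hE'.2.1 hE'.2.2.1 a b).antisymm
    (hE'.2.2.2 E hE.1 hE.2.1 hE.2.2.1 a b)

theorem exists_hexp_eq_foldr {α : Ordinal} (hα : IsPrincipal (· + ·) α) (hα0 : 0 < α)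
    (l : List (Iio α)) :
    ∃ δ < α, ∀ x, l.foldr (fun β : Iio α => hexp β) x = hexp δ x := by
  induction l with
  | nil => exact ⟨0, hα0, fun x => by rw [hexp_zero]; rfl⟩
  | cons β l ih =>
    obtain ⟨δ, hδ, hfold⟩ := ih
    exact ⟨β + δ, hα β.2 hδ, fun x => by rw [List.foldr_cons, hfold, hexp_add]; rfl⟩

theorem exists_lt_hexp_of_lt_hexp_add_one {α ξ ζ : Ordinal} (hα : IsPrincipal (· + ·) α)
    (h1 : 1 < α) (hζ : ζ < hexp α (ξ + 1)) : ∃ δ < α, ζ < hexp δ (hexp α ξ + 1) := by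
  rw [hexp_of_isPrincipal hα h1, derivFamily_add_one, lt_nfpFamily_iff] at hζ
  obtain ⟨l, hl⟩ := hζ
  obtain ⟨δ, hδ, hfold⟩ := exists_hexp_eq_foldr hα (zero_lt_one.trans h1) l
  refine ⟨δ, hδ, ?_⟩
  rwa [hexp_of_isPrincipal hα h1, ← hfold]

theorem isPrincipal_add_hexp {α x : Ordinal} (hα : IsPrincipal (· + ·) α) (h1 : 1 < α)
    (hx : x ≠ 0) : IsPrincipal (· + ·) (hexp α x) := by
  have hne : hexp α x ≠ 0 :=
    ((pos_iff_ne_zero.2 hx).trans_le (isNormal_hexp α).strictMono.le_apply).ne'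
  have hfix := hexp_hexp_of_lt hα h1 x
  rw [hexp_one, eFun_of_ne_zero hne] at hfix
  exact hfix ▸ isPrincipal_add_omega0_opow _

theorem hexp_le_hexp_left {δ η : Ordinal} (h : δ ≤ η) (x : Ordinal) :
    hexp δ x ≤ hexp η x := by
  rw [← Ordinal.add_sub_cancel_of_le h, hexp_add]
  exact (isNormal_hexp δ).monotone (isNormal_hexp _).strictMono.le_apply

end Hyperexponential

/-- If `λ` is an additively indecomposable limit ordinal and
`0 < f(η) < e^λ(ξ+1)` for all `η < λ`, then `lim_{η→λ} e^η(e^λ(ξ) + f(η)) = e^λ(ξ+1)`. -/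
theorem hyperexp_limit_formula
    (E : Ordinal.{u} → Ordinal.{u} → Ordinal.{u}) (hE : IsHyperexpFamily E)
    (ξ lam : Ordinal.{u}) (hlim : Order.IsSuccLimit lam) (hind : AddIndecomposable lam)
    (f : Ordinal.{u} → Ordinal.{u}) (hf : ∀ η < lam, 0 < f η ∧ f η < E lam (ξ + 1)) :
    ∀ ζ < E lam (ξ + 1), ∃ δ < lam, ∀ η, δ < η → η < lam →
      ζ < E η (E lam ξ + f η) ∧ E η (E lam ξ + f η) ≤ E lam (ξ + 1) := by
  obtain rfl := hE.unique isHyperexpFamily_hexp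
  have hlam : IsPrincipal (· + ·) lam := fun a b ha hb => hind.2 a ha b hb
  have h1 : 1 < lam := one_lt_of_isSuccLimit hlim
  have hT : IsPrincipal (· + ·) (hexp lam (ξ + 1)) :=
    isPrincipal_add_hexp hlam h1 (add_pos_of_right zero_lt_one ξ).ne'
  intro ζ hζ
  obtain ⟨δ, hδ, hζδ⟩ := exists_lt_hexp_of_lt_hexp_add_one hlam h1 hζ
  refine ⟨δ, hδ, fun η hδη hη => ⟨?_, ?_⟩⟩
  · calc ζ < hexp δ (hexp lam ξ + 1) := hζδ
      _ ≤ hexp η (hexp lam ξ + 1) := hexp_le_hexp_left hδη.le _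
      _ ≤ hexp η (hexp lam ξ + f η) :=
          (isNormal_hexp η).monotone (add_le_add_right (Order.one_le_iff_pos.2 (hf η hη).1) _)
  · calc hexp η (hexp lam ξ + f η) ≤ hexp η (hexp lam (ξ + 1)) :=
          (isNormal_hexp η).monotone
            (hT ((isNormal_hexp lam).strictMono (lt_add_one ξ)) (hf η hη).2).le
      _ = hexp lam (ξ + 1) := hexp_hexp_of_lt hlam hη _

end
end
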